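/- arXiv:2501.11478 — 2 statements merged into one kernel-verified Lean document; each statement's English description precedes it below -/
import Mathlib

section
/- Let f(x) = a·log(σ(x)) + b·log(1 − σ(x)) where σ(x) = e^x/(1+e^x) and a, b > 0. Then f has a unique critical point at x = log(a/b), and this point is the global maximum of f on ℝ. -/
/-!
Writing `σ = sigmoid`, we have `σ' = σ (1 - σ)`, so `(log σ)' = 1 - σ` and
`(log (1 - σ))' = -σ`. Hence `f' x = a - (a + b) σ x = (a + b) (σ (log (a / b)) - σ x)`,
because `σ (log t) = t / (1 + t)`.
Since `σ` is strictly increasing, `f'` vanishes only at `log (a / b)`, is nonnegative to its left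
and nonpositive to its right, which makes `log (a / b)` the global maximum.
-/

open Real Set

noncomputable def binaryLogLikelihood (a b x : ℝ) : ℝ :=
  a * log (sigmoid x) + b * log (1 - sigmoid x)

lemma exp_div_one_add_exp (x : ℝ) : exp x / (1 + exp x) = sigmoid x := by
  rw [sigmoid_def, exp_neg]
  field_simp
  ring

lemma sigmoid_log {t : ℝ} (ht : 0 < t) : sigmoid (log t) = t / (1 + t) := by
  rw [← exp_div_one_add_exp, exp_log ht]

lemma hasDerivAt_log_sigmoid (x : ℝ) :
    HasDerivAt (fun x => log (sigmoid x)) (1 - sigmoid x) x := by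
  convert (hasDerivAt_sigmoid x).log (sigmoid_pos x).ne' using 1
  field_simp [(sigmoid_pos x).ne']

lemma hasDerivAt_log_one_sub_sigmoid (x : ℝ) :
    HasDerivAt (fun x => log (1 - sigmoid x)) (-sigmoid x) x := by
  have hpos : 0 < 1 - sigmoid x := sub_pos.2 (sigmoid_lt_one x)
  convert ((hasDerivAt_sigmoid x).const_sub 1).log hpos.ne' using 1
  field_simp [hpos.ne']

lemma hasDerivAt_binaryLogLikelihood (a b x : ℝ) :
    HasDerivAt (binaryLogLikelihood a b) (a - (a + b) * sigmoid x) x :=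
  (((hasDerivAt_log_sigmoid x).const_mul a).add
    ((hasDerivAt_log_one_sub_sigmoid x).const_mul b)).congr_deriv (by ring)

lemma deriv_binaryLogLikelihood {a b : ℝ} (ha : 0 < a) (hb : 0 < b) (x : ℝ) :
    deriv (binaryLogLikelihood a b) x = (a + b) * (sigmoid (log (a / b)) - sigmoid x) := by
  rw [(hasDerivAt_binaryLogLikelihood a b x).deriv, sigmoid_log (div_pos ha hb)]
  field_simp
  ring

lemma deriv_binaryLogLikelihood_eq_zero_iff {a b : ℝ} (ha : 0 < a) (hb : 0 < b) (x : ℝ) :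
    deriv (binaryLogLikelihood a b) x = 0 ↔ x = log (a / b) := by
  have hab : a + b ≠ 0 := by positivity
  rw [deriv_binaryLogLikelihood ha hb, mul_eq_zero_iff_left hab, sub_eq_zero, sigmoid_inj,
    eq_comm]

lemma isMaxOn_binaryLogLikelihood {a b : ℝ} (ha : 0 < a) (hb : 0 < b) :
    IsMaxOn (binaryLogLikelihood a b) univ (log (a / b)) := by
  have hdiff : Differentiable ℝ (binaryLogLikelihood a b) := fun x =>
    (hasDerivAt_binaryLogLikelihood a b x).differentiableAt
  have hab : 0 ≤ a + b := by positivity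
  refine isMaxOn_univ_of_deriv hdiff.continuous.continuousAt hdiff.differentiableOn
    hdiff.differentiableOn (fun x hx => ?_) (fun x hx => ?_)
  · rw [deriv_binaryLogLikelihood ha hb]
    exact mul_nonneg hab (sub_nonneg.2 (sigmoid_le hx.out.le))
  · rw [deriv_binaryLogLikelihood ha hb]
    exact mul_nonpos_of_nonneg_of_nonpos hab (sub_nonpos.2 (sigmoid_le hx.out.le))

/-- The sigmoid pairwise objective `f x = a·log σ(x) + b·log (1-σ(x))` with
`σ x = exp x / (1 + exp x)` and `a, b > 0` has a unique critical point at
`x = log (a/b)`, which is its global maximum on `ℝ`. -/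
theorem sigmoid_objective_unique_critical_point_global_max
    (a b : ℝ) (ha : 0 < a) (hb : 0 < b)
    (f : ℝ → ℝ)
    (hf : f = fun x => a * Real.log (Real.exp x / (1 + Real.exp x)) +
      b * Real.log (1 - Real.exp x / (1 + Real.exp x))) :
    deriv f (Real.log (a / b)) = 0 ∧
    (∀ x : ℝ, deriv f x = 0 → x = Real.log (a / b)) ∧
    (∀ x : ℝ, f x ≤ f (Real.log (a / b))) := by
  obtain rfl : f = binaryLogLikelihood a b := by
    simp only [hf, exp_div_one_add_exp]
    rfl
  exact ⟨(deriv_binaryLogLikelihood_eq_zero_iff ha hb _).2 rfl,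
    fun x => (deriv_binaryLogLikelihood_eq_zero_iff ha hb x).1,
    fun x => isMaxOn_binaryLogLikelihood ha hb (mem_univ x)⟩
end

section
/- Let G be a finite simple graph without isolated vertices. Combining the unique maximizer x* = log(a/b) of the pairwise objective with a = P(i,j) (stationary consecutive-pair probability) and b = c·π(i)·π(j) for a fixed constant c > 0, the optimal inner product for a pair (i,j) equals log(2|E|·A_ij/(d_i·d_j)) − log c. In particular, if (i,j) is an edge, the optimal value is strictly decreasing in the degree d_j of the target node. -/
/-- Theorem 1 of the paper: plugging `a = P(i,j)` (stationary consecutive-pair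
probability) and `b = c·π i·π j` into the optimal inner product `log (a/b)`
gives `log (2|E|·A i j/(d i·d j)) − log c`; for an edge `(i,j)` this optimal
value is strictly decreasing in the degree of the target node. -/
theorem optimal_inner_product_form
    {V : Type*} [Fintype V] [DecidableEq V]
    (A : Matrix V V ℝ)
    (hA01 : ∀ i j, A i j = 0 ∨ A i j = 1)
    (hsymm : A.IsSymm) (hloop : ∀ i, A i i = 0)
    (d : V → ℝ) (hd : ∀ i, d i = ∑ j, A i j)
    (hdpos : ∀ i, 0 < d i)
    (E : ℝ) (hEpos : 0 < E) (hE : ∑ i, d i = 2 * E)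
    (π : V → ℝ) (hπ : ∀ i, π i = d i / (2 * E))
    (c : ℝ) (hc : 0 < c)
    (i j : V) (hij : A i j = 1) :
    Real.log ((π i * (A i j / d i)) / (c * π i * π j)) =
      Real.log (2 * E * A i j / (d i * d j)) - Real.log c ∧
    StrictAntiOn (fun t : ℝ => Real.log (2 * E * A i j / (d i * t)) - Real.log c)
      (Set.Ioi (0 : ℝ)) := by
  have hdi := hdpos i
  have hdj := hdpos j
  have h2E : (0:ℝ) < 2 * E := by linarith
  constructor
  · have harg : (π i * (A i j / d i)) / (c * π i * π j)
        = (2 * E * A i j / (d i * d j)) / c := by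
      rw [hπ i, hπ j]
      field_simp
    rw [harg, Real.log_div _ (ne_of_gt hc)]
    rw [hij]
    positivity
  · intro x hx y hy hxy
    simp only [Set.mem_Ioi] at hx hy
    have h1 : (0:ℝ) < 2 * E * A i j / (d i * y) := by
      rw [hij]; positivity
    have h2 : 2 * E * A i j / (d i * y) < 2 * E * A i j / (d i * x) := by
      rw [hij, mul_one]
      apply div_lt_div_of_pos_left h2E (by positivity)
      exact mul_lt_mul_of_pos_left hxy hdi
    simp only
    have := Real.log_lt_log h1 h2
    linarith
end
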